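/- Let B be an n × N real matrix with ‖B‖ ≤ 1, and let A be an N × n random matrix with independent mean-zero entries satisfying E[a_{ij}⁴] ≤ 1. Let X₁,…,X_n ∈ ℝⁿ denote the columns of BA. Then E max_{1 ≤ j ≤ n} ‖X_j‖₂² ≤ C n for an absolute constant C. -/

import Mathlib

/-!
For a fixed column `j`, `F j = ‖B a_{·j}‖²` is the quadratic form `∑ i u, M i u * a i j * a u j`
in the independent centred entries, with `M = Bᵀ B`, so its mean is
`∑ i, M i i * E a_ij² ≤ ‖B‖_F² ≤ n`. Among the fourth mixed moments of the entries only those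
whose indices pair up survive, so `Var (F j) ≤ 3 ‖M‖_F² ≤ 3 ‖B‖² ‖B‖_F² ≤ 3n`.
In place of Chebyshev and a union bound, the maximum is bounded pointwise through
`x ≤ t + x² / (4t)`: `max_j F j ≤ n + t + ∑ j, (F j - E F j)² / (4t)`, and taking expectations
with `t = n` gives `E max_j F j ≤ 2n + 3n/4`.
-/

open MeasureTheory ProbabilityTheory

/-- The ℓ² → ℓ² operator (spectral) norm of a rectangular real matrix. -/
noncomputable def opNorm {m n : ℕ} (M : Matrix (Fin m) (Fin n) ℝ) : ℝ :=
  ‖LinearMap.toContinuousLinearMap (Matrix.toEuclideanLin M)‖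

open scoped Matrix Matrix.Norms.L2Operator

instance ENNReal.holderTriple_four_four_two : ENNReal.HolderTriple 4 4 2 where
  inv_add_inv_eq_inv := by
    rw [← two_mul, show (4 : ENNReal) = 2 * 2 by norm_num, ENNReal.mul_inv (by simp) (by simp),
      ← mul_assoc, ENNReal.mul_inv_cancel (by simp) (by simp), one_mul]

namespace Matrix

variable {m n : Type*} [Fintype m] [Fintype n]

lemma sum_sq_mulVec_eq (A : Matrix m n ℝ) (y : n → ℝ) :
    ∑ k, (A *ᵥ y) k ^ 2 = ∑ i, ∑ u, (Aᵀ * A) i u * (y i * y u) := by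
  simp_rw [sq, mulVec, dotProduct, Finset.sum_mul_sum, mul_apply, transpose_apply,
    Finset.sum_mul]
  rw [Finset.sum_comm]
  exact Finset.sum_congr rfl fun i _ => by
    rw [Finset.sum_comm]
    exact Finset.sum_congr rfl fun u _ => Finset.sum_congr rfl fun k _ => by ring

lemma sum_sq_mulVec_le [DecidableEq n] (A : Matrix m n ℝ) (x : n → ℝ) :
    ∑ k, (A *ᵥ x) k ^ 2 ≤ ‖A‖ ^ 2 * ∑ i, x i ^ 2 := by
  have h := pow_le_pow_left₀ (norm_nonneg _) (A.l2_opNorm_mulVec (WithLp.toLp 2 x)) 2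
  rw [mul_pow, EuclideanSpace.norm_sq_eq, EuclideanSpace.norm_sq_eq] at h
  simpa using h

lemma sum_sq_transpose_mulVec_le [DecidableEq m] [DecidableEq n] (A : Matrix m n ℝ)
    (x : m → ℝ) : ∑ i, (Aᵀ *ᵥ x) i ^ 2 ≤ ‖A‖ ^ 2 * ∑ k, x k ^ 2 := by
  simpa [← conjTranspose_eq_transpose_of_trivial, l2_opNorm_conjTranspose]
    using sum_sq_mulVec_le Aᴴ x

lemma sum_sq_le_card_mul [DecidableEq m] [DecidableEq n] (A : Matrix m n ℝ) :
    ∑ k, ∑ i, A k i ^ 2 ≤ Fintype.card m * ‖A‖ ^ 2 := by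
  have hrow : ∀ k, ∑ i, A k i ^ 2 ≤ ‖A‖ ^ 2 := fun k => by
    simpa [Pi.single_apply, ite_pow] using sum_sq_transpose_mulVec_le A (Pi.single k 1)
  simpa using Finset.sum_le_sum fun k (_ : k ∈ Finset.univ) => hrow k

lemma sum_sq_transpose_mul_self_le [DecidableEq m] [DecidableEq n] (A : Matrix m n ℝ) :
    ∑ i, ∑ u, (Aᵀ * A) i u ^ 2 ≤ ‖A‖ ^ 2 * ∑ k, ∑ i, A k i ^ 2 := by
  rw [Finset.sum_comm, Finset.sum_comm (γ := m), Finset.mul_sum]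
  gcongr with u
  simpa [mul_apply, mulVec, dotProduct] using sum_sq_transpose_mulVec_le A (fun k => A k u)

end Matrix

section

variable {Ω : Type*} [MeasurableSpace Ω] {μ : Measure Ω}

lemma memLp_four_of_integrable_pow_four {X : Ω → ℝ} (hX : AEStronglyMeasurable X μ)
    (h : Integrable (fun ω => X ω ^ 4) μ) : MemLp X 4 μ := by
  rw [← integrable_norm_rpow_iff hX (by norm_num) (by norm_num)]
  convert h using 2 with ω
  norm_num [Real.norm_eq_abs, Even.pow_abs ⟨2, rfl⟩]

lemma integral_sq_le_one_of_integral_pow_four_le_one [IsProbabilityMeasure μ] {X : Ω → ℝ}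
    (hX : MemLp X 4 μ) (h4 : ∫ ω, X ω ^ 4 ∂μ ≤ 1) : ∫ ω, X ω ^ 2 ∂μ ≤ 1 := by
  have h := variance_eq_sub (hX.mul' hX)
  simp_rw [← sq, Pi.pow_apply, ← pow_mul] at h
  have hsq : (∫ ω, X ω ^ 2 ∂μ) ^ 2 ≤ 1 := by linarith [variance_nonneg (fun ω => X ω ^ 2) μ]
  exact (sq_le_one_iff₀ (integral_nonneg fun ω => sq_nonneg (X ω))).1 hsq

lemma le_add_sq_div_four_mul {x t : ℝ} (ht : 0 < t) : x ≤ t + x ^ 2 / (4 * t) := by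
  rw [← sub_nonneg, show t + x ^ 2 / (4 * t) - x = (x - 2 * t) ^ 2 / (4 * t) by field_simp; ring]
  positivity

lemma integral_iSup_le_add_sum_variance {κ : Type*} [Fintype κ] [Nonempty κ]
    [IsProbabilityMeasure μ] {F : κ → Ω → ℝ} (hF0 : ∀ j ω, 0 ≤ F j ω)
    (hF : ∀ j, MemLp (F j) 2 μ) {a t : ℝ} (ht : 0 < t) (hmean : ∀ j, μ[F j] ≤ a) :
    ∫ ω, ⨆ j, F j ω ∂μ ≤ a + t + (∑ j, Var[F j; μ]) / (4 * t) := by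
  have hdev : ∀ j, Integrable (fun ω => (F j ω - μ[F j]) ^ 2) μ := fun j =>
    ((hF j).sub (memLp_const _)).integrable_sq
  have hbound : ∀ ω, ⨆ j, F j ω ≤ a + t + (∑ j, (F j ω - μ[F j]) ^ 2) / (4 * t) := fun ω =>
    ciSup_le fun j => by
      have hdev_le := le_add_sq_div_four_mul (x := F j ω - μ[F j]) ht
      have hterm_le : (F j ω - μ[F j]) ^ 2 ≤ ∑ j, (F j ω - μ[F j]) ^ 2 :=
        Finset.single_le_sum (f := fun j => (F j ω - μ[F j]) ^ 2) (fun _ _ => sq_nonneg _)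
          (Finset.mem_univ j)
      have := div_le_div_of_nonneg_right hterm_le (by positivity : (0 : ℝ) ≤ 4 * t)
      linarith [hmean j]
  calc ∫ ω, ⨆ j, F j ω ∂μ
      ≤ ∫ ω, a + t + (∑ j, (F j ω - μ[F j]) ^ 2) / (4 * t) ∂μ := by
        refine integral_mono_of_nonneg (ae_of_all _ fun ω => ?_) ?_ (ae_of_all _ hbound)
        · exact (hF0 (Classical.arbitrary κ) ω).trans
            (le_ciSup (Set.finite_range fun j => F j ω).bddAbove _)
        · exact (integrable_const _).add ((integrable_finsetSum _ fun j _ => hdev j).div_const _)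
    _ = a + t + (∑ j, Var[F j; μ]) / (4 * t) := by
        rw [integral_add (integrable_const _)
            ((integrable_finsetSum _ fun j _ => hdev j).div_const _),
          integral_const, integral_div, integral_finsetSum _ fun j _ => hdev j]
        simp [variance_eq_integral (hF _).aestronglyMeasurable.aemeasurable]

end

namespace ProbabilityTheory

variable {Ω ι : Type*} [MeasurableSpace Ω] {μ : Measure Ω} {Y : ι → Ω → ℝ}

lemma iIndepFun.integral_mul_comp_eq_zero (hind : iIndepFun Y μ)
    (hmeas : ∀ i, Measurable (Y i)) {i : ι} (hi : μ[Y i] = 0) {T : Finset ι} (hiT : i ∉ T)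
    {g : (T → ℝ) → ℝ} (hg : Measurable g) : ∫ ω, Y i ω * g (fun t => Y t ω) ∂μ = 0 := by
  have hindep := (hind.indepFun_finset {i} T (Finset.disjoint_singleton_left.2 hiT) hmeas).comp
    (measurable_pi_apply ⟨i, Finset.mem_singleton_self i⟩) hg
  have h := hindep.integral_fun_mul_eq_mul_integral (hmeas i).aestronglyMeasurable
    (hg.comp (measurable_pi_lambda _ fun t => hmeas t)).aestronglyMeasurable
  simpa [Function.comp_def, hi] using h

lemma iIndepFun.integral_mul_eq_zero (hind : iIndepFun Y μ) (hmeas : ∀ i, Measurable (Y i))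
    {i u : ι} (hi : μ[Y i] = 0) (hu : u ≠ i) : ∫ ω, Y i ω * Y u ω ∂μ = 0 :=
  hind.integral_mul_comp_eq_zero hmeas hi (T := {u}) (by simpa using hu.symm)
    (g := fun x => x ⟨u, by simp⟩) (measurable_pi_apply _)

lemma iIndepFun.integral_mul_mul_mul_eq_zero (hind : iIndepFun Y μ)
    (hmeas : ∀ i, Measurable (Y i)) {i u v w : ι} (hi : μ[Y i] = 0) (hu : u ≠ i) (hv : v ≠ i)
    (hw : w ≠ i) : ∫ ω, Y i ω * Y u ω * (Y v ω * Y w ω) ∂μ = 0 := by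
  classical
  simp_rw [mul_assoc]
  exact hind.integral_mul_comp_eq_zero hmeas hi (T := {u, v, w})
    (by simp [hu.symm, hv.symm, hw.symm])
    (g := fun x => x ⟨u, by simp⟩ * (x ⟨v, by simp⟩ * x ⟨w, by simp⟩)) (by fun_prop)

lemma iIndepFun.integral_sq_mul_sq (hind : iIndepFun Y μ) (hmeas : ∀ i, Measurable (Y i))
    {i u : ι} (hiu : i ≠ u) :
    ∫ ω, Y i ω ^ 2 * Y u ω ^ 2 ∂μ = (∫ ω, Y i ω ^ 2 ∂μ) * ∫ ω, Y u ω ^ 2 ∂μ :=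
  ((hind.indepFun hiu).comp (measurable_id.pow_const 2)
    (measurable_id.pow_const 2)).integral_fun_mul_eq_mul_integral
      ((hmeas i).pow_const 2).aestronglyMeasurable ((hmeas u).pow_const 2).aestronglyMeasurable

lemma iIndepFun.integral_mul_eq_ite [DecidableEq ι] (hind : iIndepFun Y μ)
    (hmeas : ∀ i, Measurable (Y i)) (hzero : ∀ i, μ[Y i] = 0) (i u : ι) :
    ∫ ω, Y i ω * Y u ω ∂μ = if i = u then ∫ ω, Y i ω ^ 2 ∂μ else 0 := by
  split_ifs with h
  · simp [h, sq]
  · exact hind.integral_mul_eq_zero hmeas (hzero i) (Ne.symm h)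

lemma iIndepFun.integral_mul_mul_mul_mul [DecidableEq ι] (hind : iIndepFun Y μ)
    (hmeas : ∀ i, Measurable (Y i)) (hzero : ∀ i, μ[Y i] = 0) (i u v w : ι) :
    ∫ ω, Y i ω * Y u ω * (Y v ω * Y w ω) ∂μ =
      (if i = u ∧ v = w then (∫ ω, Y i ω ^ 2 ∂μ) * ∫ ω, Y v ω ^ 2 ∂μ else 0)
      + (if i = v ∧ u = w then (∫ ω, Y i ω ^ 2 ∂μ) * ∫ ω, Y u ω ^ 2 ∂μ else 0)
      + (if i = w ∧ u = v then (∫ ω, Y i ω ^ 2 ∂μ) * ∫ ω, Y u ω ^ 2 ∂μ else 0)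
      + (if i = u ∧ i = v ∧ i = w then
          (∫ ω, Y i ω ^ 4 ∂μ) - 3 * (∫ ω, Y i ω ^ 2 ∂μ) ^ 2 else 0) := by
  have vanish := fun {i u v w : ι} => hind.integral_mul_mul_mul_eq_zero hmeas (hzero i)
    (u := u) (v := v) (w := w)
  have swap_left : ∀ a b c d : ι, ∫ ω, Y a ω * Y b ω * (Y c ω * Y d ω) ∂μ
      = ∫ ω, Y b ω * Y a ω * (Y c ω * Y d ω) ∂μ := fun a b c d => by
    simp_rw [mul_comm (Y a _)]
  have swap_pairs : ∀ a b c d : ι, ∫ ω, Y a ω * Y b ω * (Y c ω * Y d ω) ∂μ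
      = ∫ ω, Y c ω * Y d ω * (Y a ω * Y b ω) ∂μ := fun a b c d => by
    simp_rw [mul_comm (Y a _ * _)]
  by_cases hi : u ≠ i ∧ v ≠ i ∧ w ≠ i
  · simp [vanish hi.1 hi.2.1 hi.2.2, hi.1.symm, hi.2.1.symm, hi.2.2.symm]
  by_cases hu : i ≠ u ∧ v ≠ u ∧ w ≠ u
  · simp [swap_left i, vanish hu.1 hu.2.1 hu.2.2, hu.1, hu.2.1.symm, hu.2.2.symm]
  by_cases hv : w ≠ v ∧ i ≠ v ∧ u ≠ v
  · simp [swap_pairs i u, vanish hv.1 hv.2.1 hv.2.2, hv.1.symm, hv.2.1, hv.2.2]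
  by_cases hw : v ≠ w ∧ i ≠ w ∧ u ≠ w
  · simp [swap_pairs i u, swap_left v, vanish hw.1 hw.2.1 hw.2.2, hw.1, hw.2.1, hw.2.2]
  have sq_mul_sq : ∀ a b : ι, a ≠ b → ∀ f : Ω → ℝ, (∀ ω, f ω = Y a ω ^ 2 * Y b ω ^ 2) →
      ∫ ω, f ω ∂μ = (∫ ω, Y a ω ^ 2 ∂μ) * ∫ ω, Y b ω ^ 2 ∂μ := fun a b hab f hf => by
    simp_rw [hf]; exact hind.integral_sq_mul_sq hmeas hab
  rcases eq_or_ne i u with rfl | hiu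
  · rcases eq_or_ne i v with rfl | hiv
    · obtain rfl : i = w := by grind
      simp_rw [show ∀ ω, Y i ω * Y i ω * (Y i ω * Y i ω) = Y i ω ^ 4 from fun ω => by ring]
      simp
      ring
    · obtain rfl : v = w := by grind
      rw [sq_mul_sq i v hiv _ fun ω => by ring]
      simp [hiv]
  · rcases eq_or_ne i v with rfl | hiv
    · obtain rfl : u = w := by grind
      rw [sq_mul_sq i u hiu _ fun ω => by ring]
      simp [hiu]
    · obtain ⟨rfl, rfl⟩ : i = w ∧ u = v := by grind
      rw [sq_mul_sq i u hiu _ fun ω => by ring]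
      simp [hiu]

variable [Fintype ι]

lemma memLp_quadForm (hY : ∀ i, MemLp (Y i) 4 μ) (M : ι → ι → ℝ) :
    MemLp (fun ω => ∑ i, ∑ u, M i u * (Y i ω * Y u ω)) 2 μ :=
  memLp_finsetSum _ fun i _ => memLp_finsetSum _ fun u _ => ((hY u).mul' (hY i)).const_mul _

lemma iIndepFun.integral_quadForm [IsProbabilityMeasure μ] (hind : iIndepFun Y μ)
    (hmeas : ∀ i, Measurable (Y i)) (hzero : ∀ i, μ[Y i] = 0) (hY : ∀ i, MemLp (Y i) 4 μ)
    (M : ι → ι → ℝ) :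
    ∫ ω, ∑ i, ∑ u, M i u * (Y i ω * Y u ω) ∂μ = ∑ i, M i i * ∫ ω, Y i ω ^ 2 ∂μ := by
  classical
  have hint : ∀ i u, Integrable (fun ω => M i u * (Y i ω * Y u ω)) μ := fun i u =>
    (((hY u).mul' (hY i) : MemLp _ 2 μ).integrable one_le_two).const_mul _
  rw [integral_finsetSum _ fun i _ => integrable_finsetSum _ fun u _ => hint i u]
  simp_rw [integral_finsetSum _ fun u _ => hint _ u, integral_const_mul,
    hind.integral_mul_eq_ite hmeas hzero]
  simp

lemma iIndepFun.integral_sq_quadForm [IsProbabilityMeasure μ] (hind : iIndepFun Y μ)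
    (hmeas : ∀ i, Measurable (Y i)) (hzero : ∀ i, μ[Y i] = 0) (hY : ∀ i, MemLp (Y i) 4 μ)
    {M : ι → ι → ℝ} (hM : ∀ i u, M u i = M i u) :
    ∫ ω, (∑ i, ∑ u, M i u * (Y i ω * Y u ω)) ^ 2 ∂μ =
      (∑ i, M i i * ∫ ω, Y i ω ^ 2 ∂μ) ^ 2
      + 2 * ∑ i, ∑ u, M i u ^ 2 * ((∫ ω, Y i ω ^ 2 ∂μ) * ∫ ω, Y u ω ^ 2 ∂μ)
      + ∑ i, M i i ^ 2 * ((∫ ω, Y i ω ^ 4 ∂μ) - 3 * (∫ ω, Y i ω ^ 2 ∂μ) ^ 2) := by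
  classical
  have hint : ∀ i u v w,
      Integrable (fun ω => M i u * M v w * (Y i ω * Y u ω * (Y v ω * Y w ω))) μ :=
    fun i u v w => (((hY u).mul' (hY i) : MemLp _ 2 μ).integrable_mul
      ((hY w).mul' (hY v) : MemLp _ 2 μ)).const_mul _
  have expand : ∀ ω, (∑ i, ∑ u, M i u * (Y i ω * Y u ω)) ^ 2 =
      ∑ i, ∑ u, ∑ v, ∑ w, M i u * M v w * (Y i ω * Y u ω * (Y v ω * Y w ω)) := fun ω => by
    simp only [sq, Finset.sum_mul_sum]
    refine Finset.sum_congr rfl fun i _ => ?_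
    rw [Finset.sum_comm]
    exact Finset.sum_congr rfl fun u _ => Finset.sum_congr rfl fun v _ =>
      Finset.sum_congr rfl fun w _ => by ring
  simp_rw [expand]
  simp (disch := (intro _ _; repeat (apply integrable_finsetSum; intro _ _)); exact hint _ _ _ _)
    only [integral_finsetSum]
  simp_rw [integral_const_mul, hind.integral_mul_mul_mul_mul hmeas hzero]
  simp only [mul_add, Finset.sum_add_distrib, mul_ite, mul_zero, ite_and, Finset.sum_ite_eq,
    Finset.mem_univ, if_true, Finset.sum_ite_irrel, Finset.sum_const_zero]
  have diag : ∑ i, ∑ u, M i i * M u u * ((∫ ω, Y i ω ^ 2 ∂μ) * ∫ ω, Y u ω ^ 2 ∂μ)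
      = (∑ i, M i i * ∫ ω, Y i ω ^ 2 ∂μ) ^ 2 := by
    rw [sq, Finset.sum_mul_sum]
    exact Finset.sum_congr rfl fun i _ => Finset.sum_congr rfl fun u _ => by ring
  have transposed : ∀ i u, M i u * M u i = M i u ^ 2 := fun i u => by rw [hM, sq]
  simp only [transposed, diag, ← sq]
  ring

lemma iIndepFun.variance_quadForm_le [IsProbabilityMeasure μ] (hind : iIndepFun Y μ)
    (hmeas : ∀ i, Measurable (Y i)) (hzero : ∀ i, μ[Y i] = 0) (hY : ∀ i, MemLp (Y i) 4 μ)
    (h4 : ∀ i, ∫ ω, Y i ω ^ 4 ∂μ ≤ 1) {M : ι → ι → ℝ} (hM : ∀ i u, M u i = M i u) :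
    Var[fun ω => ∑ i, ∑ u, M i u * (Y i ω * Y u ω); μ] ≤ 3 * ∑ i, ∑ u, M i u ^ 2 := by
  have hq : ∀ i, 0 ≤ ∫ ω, Y i ω ^ 2 ∂μ ∧ ∫ ω, Y i ω ^ 2 ∂μ ≤ 1 := fun i =>
    ⟨integral_nonneg fun ω => sq_nonneg (Y i ω),
      integral_sq_le_one_of_integral_pow_four_le_one (hY i) (h4 i)⟩
  have off_diag : ∑ i, ∑ u, M i u ^ 2 * ((∫ ω, Y i ω ^ 2 ∂μ) * ∫ ω, Y u ω ^ 2 ∂μ)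
      ≤ ∑ i, ∑ u, M i u ^ 2 := by
    gcongr with i _ u _
    exact mul_le_of_le_one_right (sq_nonneg _) (mul_le_one₀ (hq i).2 (hq u).1 (hq u).2)
  have diag : ∑ i, M i i ^ 2 * ((∫ ω, Y i ω ^ 4 ∂μ) - 3 * (∫ ω, Y i ω ^ 2 ∂μ) ^ 2)
      ≤ ∑ i, ∑ u, M i u ^ 2 := by
    gcongr with i
    calc M i i ^ 2 * ((∫ ω, Y i ω ^ 4 ∂μ) - 3 * (∫ ω, Y i ω ^ 2 ∂μ) ^ 2) ≤ M i i ^ 2 :=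
          mul_le_of_le_one_right (sq_nonneg _) (by nlinarith [h4 i])
      _ ≤ ∑ u, M i u ^ 2 :=
          Finset.single_le_sum (f := fun u => M i u ^ 2) (fun _ _ => sq_nonneg _)
            (Finset.mem_univ i)
  rw [variance_eq_sub (memLp_quadForm hY M)]
  simp only [Pi.pow_apply]
  rw [hind.integral_sq_quadForm hmeas hzero hY hM, hind.integral_quadForm hmeas hzero hY]
  linarith

lemma memLp_sum_sq_mulVec {m : Type*} [Fintype m] (hY : ∀ i, MemLp (Y i) 4 μ)
    (A : Matrix m ι ℝ) : MemLp (fun ω => ∑ k, (A *ᵥ fun i => Y i ω) k ^ 2) 2 μ := by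
  simpa only [Matrix.sum_sq_mulVec_eq] using memLp_quadForm hY (Aᵀ * A)

lemma iIndepFun.integral_sum_sq_mulVec_le {m : Type*} [Fintype m] [IsProbabilityMeasure μ]
    (hind : iIndepFun Y μ) (hmeas : ∀ i, Measurable (Y i)) (hzero : ∀ i, μ[Y i] = 0)
    (hY : ∀ i, MemLp (Y i) 4 μ) (h4 : ∀ i, ∫ ω, Y i ω ^ 4 ∂μ ≤ 1) (A : Matrix m ι ℝ) :
    ∫ ω, ∑ k, (A *ᵥ fun i => Y i ω) k ^ 2 ∂μ ≤ ∑ k, ∑ i, A k i ^ 2 := by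
  simp only [Matrix.sum_sq_mulVec_eq]
  rw [hind.integral_quadForm hmeas hzero hY (Aᵀ * A), Finset.sum_comm]
  gcongr with i
  rw [Matrix.mul_apply]
  simp only [Matrix.transpose_apply, ← sq]
  exact mul_le_of_le_one_right (Finset.sum_nonneg fun k _ => sq_nonneg _)
    (integral_sq_le_one_of_integral_pow_four_le_one (hY i) (h4 i))

lemma iIndepFun.variance_sum_sq_mulVec_le {m : Type*} [Fintype m] [DecidableEq m]
    [DecidableEq ι] [IsProbabilityMeasure μ] (hind : iIndepFun Y μ)
    (hmeas : ∀ i, Measurable (Y i)) (hzero : ∀ i, μ[Y i] = 0) (hY : ∀ i, MemLp (Y i) 4 μ)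
    (h4 : ∀ i, ∫ ω, Y i ω ^ 4 ∂μ ≤ 1) (A : Matrix m ι ℝ) :
    Var[fun ω => ∑ k, (A *ᵥ fun i => Y i ω) k ^ 2; μ]
      ≤ 3 * (‖A‖ ^ 2 * ∑ k, ∑ i, A k i ^ 2) := by
  simp only [Matrix.sum_sq_mulVec_eq]
  have hsymm : ∀ i u, (Aᵀ * A) u i = (Aᵀ * A) i u := fun i u => by
    simp only [Matrix.mul_apply, Matrix.transpose_apply, mul_comm]
  grw [hind.variance_quadForm_le hmeas hzero hY h4 hsymm, A.sum_sq_transpose_mul_self_le]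

end ProbabilityTheory

/-- There is an absolute constant `C` such that: if `B` is an `n × N` matrix with `‖B‖ ≤ 1`
and `A` is an `N × n` random matrix with independent mean-zero entries with fourth moments
bounded by `1`, and `X₁,…,X_n` denote the columns of `BA`, then
`E max_j ‖X_j‖₂² ≤ C n`. -/
theorem exp_max_column_norms :
    ∃ C : ℝ, 0 < C ∧
      ∀ (Ω : Type) (_ : MeasureSpace Ω), IsProbabilityMeasure (ℙ : Measure Ω) →
      ∀ (n N : ℕ) (B : Matrix (Fin n) (Fin N) ℝ), opNorm B ≤ 1 →
      ∀ (a : Fin N → Fin n → Ω → ℝ),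
      (∀ i j, Measurable (a i j)) →
      iIndepFun (fun p : Fin N × Fin n => a p.1 p.2) ℙ →
      (∀ i j, ∫ ω, a i j ω = 0) →
      (∀ i j, (∫ ω, (a i j ω) ^ 4) ≤ 1) →
      (∀ i j, Integrable (fun ω => (a i j ω) ^ 4)) →
        (∫ ω, ⨆ j : Fin n, ∑ k : Fin n, (∑ i : Fin N, B k i * a i j ω) ^ 2)
          ≤ C * n := by
  refine ⟨3, by norm_num, fun Ω _ _ n N B hB a hmeas hind hzero h4 hint4 => ?_⟩
  rcases Nat.eq_zero_or_pos n with rfl | hn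
  · simp
  have : Nonempty (Fin n) := ⟨⟨0, hn⟩⟩
  have hnR : (0 : ℝ) < n := Nat.cast_pos.2 hn
  have hcol : ∀ j, iIndepFun (fun i => a i j) ℙ := fun j =>
    hind.precomp (g := fun i => (i, j)) fun _ _ h => (Prod.ext_iff.1 h).1
  have hY : ∀ i j, MemLp (a i j) 4 ℙ := fun i j =>
    memLp_four_of_integrable_pow_four (hmeas i j).aestronglyMeasurable (hint4 i j)
  -- `opNorm B` is by definition the norm of `B` under `Matrix.Norms.L2Operator`.
  have hB' : ‖B‖ ^ 2 ≤ 1 := pow_le_one₀ (norm_nonneg B) hB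
  have hfrob : ∑ k, ∑ i, B k i ^ 2 ≤ n := by
    simpa using B.sum_sq_le_card_mul.trans (mul_le_of_le_one_right (Nat.cast_nonneg _) hB')
  have hvar : ∀ j, Var[fun ω => ∑ k, (B *ᵥ fun i => a i j ω) k ^ 2; ℙ] ≤ 3 * n := fun j =>
    ((hcol j).variance_sum_sq_mulVec_le (hmeas · j) (hzero · j) (hY · j) (h4 · j) B).trans
      (by gcongr; exact (mul_le_of_le_one_left (by positivity) hB').trans hfrob)
  calc (∫ ω, ⨆ j : Fin n, ∑ k : Fin n, (∑ i : Fin N, B k i * a i j ω) ^ 2)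
      ≤ n + n + (∑ j : Fin n, Var[fun ω => ∑ k, (B *ᵥ fun i => a i j ω) k ^ 2; ℙ]) / (4 * n) :=
        integral_iSup_le_add_sum_variance (fun j ω => by positivity)
          (fun j => memLp_sum_sq_mulVec (hY · j) B) hnR
          (fun j => ((hcol j).integral_sum_sq_mulVec_le (hmeas · j) (hzero · j) (hY · j)
            (h4 · j) B).trans hfrob)
    _ ≤ n + n + (∑ _j : Fin n, 3 * (n : ℝ)) / (4 * n) := by gcongr with j; exact hvar j
    _ ≤ 3 * n := by
        rw [Finset.sum_const, Finset.card_univ, Fintype.card_fin, nsmul_eq_mul]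
        rw [show (n : ℝ) * (3 * n) / (4 * n) = 3 * n / 4 by field_simp]
        linarith
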